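/- Let q ≥ 2 be even and k ≥ 2, and let (α_1,...,α_N) be the binary Gray code list F(n,k) of binary strings of length n avoiding k consecutive 0's. Then the list ε(α_1) ∘ reverse(ε(α_2)) ∘ ε(α_3) ∘ ... (alternating, with the last expansion reversed iff N is even) is a Gray code list with Hamming distance 1 for the set of length-n strings over {0,...,q-1} avoiding k consecutive 0's. -/

import Mathlib

/-- Hamming distance between two (equal-length) strings. -/
def hamming {α : Type*} [DecidableEq α] (u v : List α) : ℕ :=
  (List.zip u v).countP (fun p => decide (p.1 ≠ p.2))

/-- The generalized reflected Gray code over the alphabet `{0,...,q-1} ⊆ ℕ`. -/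
def grayN (q : ℕ) : ℕ → List (List ℕ)
  | 0 => [[]]
  | n+1 => ((List.range q).map (fun i =>
      (if i % 2 = 0 then grayN q n else (grayN q n).reverse).map (fun w => i :: w))).flatten

/-- The binary reflected Gray code `C(n)` (strings over `{0,1} ⊆ ℕ`):
`C(0) = (λ)`, `C(n) = 1·reverse(C(n-1)) ∘ 0·C(n-1)`. -/
def C : ℕ → List (List ℕ)
  | 0 => [[]]
  | n+1 => (C n).reverse.map (fun w => 1 :: w) ++ (C n).map (fun w => 0 :: w)

/-- The Gray code list `F(n,k)` of binary strings avoiding `k` consecutive `0`'s: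
`F(n,k) = C(n)` for `n < k`, and for `n ≥ k`,
`F(n,k) = 1·reverse(F(n-1,k)) ∘ 01·reverse(F(n-2,k)) ∘ ⋯ ∘ 0^(k-1)1·reverse(F(n-k,k))`. -/
def F (k : ℕ) : ℕ → List (List ℕ)
  | n =>
    if h : n < k ∨ k = 0 then C n
    else ((List.range k).map (fun j =>
      (F k (n - (j+1))).reverse.map (fun w => List.replicate j 0 ++ 1 :: w))).flatten
termination_by n => n
decreasing_by push_neg at h; omega

/-- Replace the ones of a binary string, from left to right, by the symbols of `x`
(zeros stay in place). -/
def place : List ℕ → List ℕ → List ℕ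
  | [], _ => []
  | b :: β, x => if b = 0 then 0 :: place β x else x.headD 1 :: place β x.tail

/-- The expansion `ε(β)` of a binary string `β` for the alphabet `{0,...,q-1}`:
the `i`-th element replaces the ones of `β`, left to right, by the symbols of the
`i`-th string of `G(t,q-1) ⊕ 1` (the reflected Gray code over `{1,...,q-1}`). -/
def expansion (q : ℕ) (β : List ℕ) : List (List ℕ) :=
  ((grayN (q-1) (β.count 1)).map (fun w => w.map (· + 1))).map (place β)

/-- Alternating concatenation of a list of blocks: the `i`-th block (0-indexed)
is reversed exactly when `i` is odd. -/
def alt {α : Type*} (Ls : List (List α)) : List α :=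
  (Ls.zipIdx.map (fun p => if p.2 % 2 = 0 then p.1 else p.1.reverse)).flatten

/-- The list `ε(α_1) ∘ reverse(ε(α_2)) ∘ ε(α_3) ∘ ⋯` obtained from
`F(n,k) = (α_1,...,α_N)`. -/
def Feven (q k n : ℕ) : List (List ℕ) := alt ((F k n).map (expansion q))


/-!
`F(n,k)` is a Gray code: inside the block `0^j 1 · reverse F(n-j-1,k)` this is the induction
hypothesis, and consecutive blocks meet at `0^j 1 1 x` and `0^j 0 1 x`, because `F(m+1,k)` starts
with `1 · last F(m,k)`. The expansion `ε(β)` substitutes the strings of a reflected Gray code over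
`{1,…,q-1}` into the ones of `β`, which preserves Hamming distance; so `ε(β)` is a Gray code that
starts at `β` and, since `q - 1` is odd, ends at `β` with its ones replaced by `q - 1`. Hence
consecutive expansions, traversed in alternating directions, are joined by steps of distance one.
A `q`-ary word lies in exactly one expansion, that of its zero/nonzero pattern, and it contains
`0^k` exactly when its pattern does.
-/
section Hamming

variable {α : Type*} [DecidableEq α]

@[simp] lemma hamming_nil_left (v : List α) : hamming [] v = 0 := by simp [hamming]

@[simp] lemma hamming_nil_right (u : List α) : hamming u [] = 0 := by simp [hamming]

@[simp] lemma hamming_cons (a b : α) (u v : List α) :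
    hamming (a :: u) (b :: v) = hamming u v + if a = b then 0 else 1 := by
  by_cases h : a = b <;> simp [hamming, h]

@[simp] lemma hamming_self (u : List α) : hamming u u = 0 := by
  induction u <;> simp_all

lemma hamming_comm (u v : List α) : hamming u v = hamming v u := by
  induction u generalizing v with
  | nil => simp
  | cons a u ih => cases v <;> simp [ih, eq_comm]

@[simp] lemma hamming_append_left (p u v : List α) : hamming (p ++ u) (p ++ v) = hamming u v := by
  induction p <;> simp_all

lemma eq_of_hamming_eq_zero {u v : List α} (hl : u.length = v.length) (h : hamming u v = 0) :
    u = v := by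
  induction u generalizing v with
  | nil => exact (List.length_eq_zero_iff.mp hl.symm).symm
  | cons a u ih =>
    cases v with
    | nil => simp at hl
    | cons b v =>
      simp only [hamming_cons, Nat.add_eq_zero_iff, ite_eq_left_iff, one_ne_zero, imp_false,
        not_not] at h
      rw [h.2, ih (by simpa using hl) h.1]

lemma hamming_map {β : Type*} [DecidableEq β] {f : α → β} {u v : List α}
    (hf : ∀ a ∈ u, ∀ b ∈ v, f a = f b → a = b) :
    hamming (u.map f) (v.map f) = hamming u v := by
  induction u generalizing v with
  | nil => simp
  | cons a u ih =>
    cases v with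
    | nil => simp
    | cons b v =>
      have hab : f a = f b ↔ a = b :=
        ⟨hf a (by simp) b (by simp), fun h => h ▸ rfl⟩
      simp only [List.map_cons, hamming_cons, hab,
        ih fun x hx y hy => hf x (List.mem_cons_of_mem a hx) y (List.mem_cons_of_mem b hy)]

lemma isChain_hamming_reverse {L : List (List α)} :
    L.reverse.IsChain (fun u v => hamming u v = 1) ↔ L.IsChain (fun u v => hamming u v = 1) := by
  rw [List.isChain_reverse]
  exact List.IsChain.iff fun u v => by rw [hamming_comm]

lemma isChain_hamming_map {f : List α → List α} (hf : ∀ u v, hamming (f u) (f v) = hamming u v)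
    {L : List (List α)} :
    (L.map f).IsChain (fun u v => hamming u v = 1) ↔ L.IsChain (fun u v => hamming u v = 1) := by
  simp [List.isChain_map, hf]

end Hamming

section Alternating

variable {α : Type*}

@[simp] lemma alt_nil : alt ([] : List (List α)) = [] := rfl

@[simp] lemma alt_singleton (L : List α) : alt [L] = L := by simp [alt]

lemma alt_cons_cons (L₁ L₂ : List α) (Ls : List (List α)) :
    alt (L₁ :: L₂ :: Ls) = L₁ ++ L₂.reverse ++ alt Ls := by
  simp only [alt, List.zipIdx_cons, List.zipIdx_eq_map_add (i := 0 + 1 + 1), List.map_cons,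
    List.map_map, List.flatten_cons, List.append_assoc]
  congr 4
  funext p
  simp

lemma mem_alt {Ls : List (List α)} {x : α} : x ∈ alt Ls ↔ ∃ L ∈ Ls, x ∈ L := by
  induction Ls using List.twoStepInduction with
  | nil => simp
  | singleton L => simp
  | cons_cons L₁ L₂ Ls ih => simp [alt_cons_cons, ih]

lemma nodup_alt {Ls : List (List α)} (hnodup : ∀ L ∈ Ls, L.Nodup)
    (hdisj : Ls.Pairwise List.Disjoint) : (alt Ls).Nodup := by
  induction Ls using List.twoStepInduction with
  | nil => simp
  | singleton L => simpa using hnodup L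
  | cons_cons L₁ L₂ Ls ih =>
    simp only [List.pairwise_cons, List.mem_cons, forall_eq_or_imp] at hdisj hnodup
    obtain ⟨⟨h₁₂, h₁⟩, h₂, hLs⟩ := hdisj
    rw [alt_cons_cons, List.nodup_append, List.nodup_append]
    refine ⟨⟨hnodup.1, List.nodup_reverse.mpr hnodup.2.1, ?_⟩, ih hnodup.2.2 hLs, ?_⟩
    · rintro a ha _ hb rfl
      exact h₁₂ ha (List.mem_reverse.mp hb)
    · rintro a ha _ hb rfl
      obtain ⟨L, hL, haL⟩ := mem_alt.mp hb
      rcases List.mem_append.mp ha with ha | ha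
      · exact h₁ L hL ha haL
      · exact h₂ L hL (List.mem_reverse.mp ha) haL

lemma head?_alt_cons {L : List α} (hL : L ≠ []) (Ls : List (List α)) :
    (alt (L :: Ls)).head? = L.head? := by
  cases Ls with
  | nil => simp
  | cons L₂ Ls => rw [alt_cons_cons, List.append_assoc, List.head?_append_of_ne_nil _ hL]

lemma isChain_alt {R : α → α → Prop} (hsymm : ∀ a b, R a b → R b a) {Ls : List (List α)}
    (hne : ∀ L ∈ Ls, L ≠ []) (hchain : ∀ L ∈ Ls, L.IsChain R)
    (hjoin : Ls.IsChain fun A B =>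
      (∀ x ∈ A.getLast?, ∀ y ∈ B.getLast?, R x y) ∧ (∀ x ∈ A.head?, ∀ y ∈ B.head?, R x y)) :
    (alt Ls).IsChain R := by
  induction Ls using List.twoStepInduction with
  | nil => simp
  | singleton L => simpa using hchain L
  | cons_cons L₁ L₂ Ls ih =>
    simp only [List.mem_cons, forall_eq_or_imp] at hne hchain
    rw [List.isChain_cons_cons] at hjoin
    rw [alt_cons_cons, List.isChain_append, List.isChain_append]
    refine ⟨⟨hchain.1, ?_, ?_⟩, ih hne.2.2 hchain.2.2 hjoin.2.tail, ?_⟩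
    · exact List.isChain_reverse.mpr (hchain.2.1.imp fun a b => hsymm a b)
    · rw [List.head?_reverse]
      exact hjoin.1.1
    · intro x hx y hy
      rw [List.getLast?_append_of_ne_nil _ (by simpa using hne.2.1), List.getLast?_reverse] at hx
      cases Ls with
      | nil => simp at hy
      | cons L₃ Ls =>
        rw [head?_alt_cons (hne.2.2 L₃ (by simp))] at hy
        exact (List.isChain_cons_cons.mp hjoin.2).1.2 x hx y hy

end Alternating

section ReflectedGray

lemma grayN_succ (q n : ℕ) :
    grayN q (n + 1) = ((List.range q).map fun i =>
      (if i % 2 = 0 then grayN q n else (grayN q n).reverse).map (i :: ·)).flatten := by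
  rw [grayN]

lemma grayN_ne_nil {q : ℕ} (hq : q ≠ 0) (n : ℕ) : grayN q n ≠ [] := by
  induction n with
  | zero => simp [grayN]
  | succ n ih =>
    obtain ⟨q, rfl⟩ := Nat.exists_eq_succ_of_ne_zero hq
    simp [grayN_succ, List.range_succ_eq_map, ih]

lemma mem_grayN {q n : ℕ} {w : List ℕ} : w ∈ grayN q n ↔ w.length = n ∧ ∀ b ∈ w, b < q := by
  induction n generalizing w with
  | zero => cases w <;> simp [grayN]
  | succ n ih =>
    cases w with
    | nil => simp [grayN_succ]
    | cons b v =>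
      have hblock (i : ℕ) : v ∈ (if i % 2 = 0 then grayN q n else (grayN q n).reverse) ↔
          v ∈ grayN q n := by split <;> simp
      simp [grayN_succ, hblock, ih, and_left_comm]

lemma nodup_grayN (q n : ℕ) : (grayN q n).Nodup := by
  induction n with
  | zero => simp [grayN]
  | succ n ih =>
    rw [grayN_succ, List.nodup_flatten, List.pairwise_map]
    refine ⟨?_, List.pairwise_lt_range.imp fun hij => ?_⟩
    · simp only [List.mem_map, forall_exists_index, and_imp, forall_apply_eq_imp_iff₂]
      intro i _
      exact List.Nodup.map List.cons_injective (by split <;> simp [ih])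
    · simp only [List.disjoint_left, List.mem_map]
      rintro _ ⟨v, -, rfl⟩ ⟨v', -, h⟩
      exact hij.ne (List.cons_eq_cons.mp h).1.symm

lemma head?_grayN {q : ℕ} (hq : q ≠ 0) (n : ℕ) :
    (grayN q n).head? = some (List.replicate n 0) := by
  induction n with
  | zero => simp [grayN]
  | succ n ih =>
    obtain ⟨q, rfl⟩ := Nat.exists_eq_succ_of_ne_zero hq
    rw [grayN_succ, List.range_succ_eq_map, List.map_cons, List.flatten_cons,
      List.head?_append_of_ne_nil _ (by simp [grayN_ne_nil hq])]
    simp [ih, List.replicate_succ]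

lemma getLast?_grayN_succ {q : ℕ} (hq : q ≠ 0) (n : ℕ) :
    (grayN q (n + 1)).getLast? =
      ((if (q - 1) % 2 = 0 then grayN q n else (grayN q n).reverse).getLast?).map
        ((q - 1) :: ·) := by
  obtain ⟨q, rfl⟩ := Nat.exists_eq_succ_of_ne_zero hq
  rw [grayN_succ, List.range_succ, List.map_append, List.map_singleton, List.flatten_append,
    List.flatten_singleton, List.getLast?_append_of_ne_nil _ (by split <;> simp [grayN_ne_nil hq]),
    List.getLast?_map]
  rfl

lemma getLast?_grayN_of_odd {q : ℕ} (hq : Odd q) (n : ℕ) :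
    (grayN q n).getLast? = some (List.replicate n (q - 1)) := by
  have hq' : (q - 1) % 2 = 0 := by obtain ⟨r, rfl⟩ := hq; simp
  induction n with
  | zero => simp [grayN]
  | succ n ih => simp [getLast?_grayN_succ hq.pos.ne', hq', ih, List.replicate_succ]

lemma getLast?_grayN_succ_of_even {q : ℕ} (hq : Even q) (hq0 : q ≠ 0) (n : ℕ) :
    (grayN q (n + 1)).getLast? = some ((q - 1) :: List.replicate n 0) := by
  have hq' : (q - 1) % 2 = 1 := by obtain ⟨r, rfl⟩ := hq; omega
  simp [getLast?_grayN_succ hq0, hq', head?_grayN hq0]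

lemma isChain_grayN (q n : ℕ) : (grayN q n).IsChain (fun u v => hamming u v = 1) := by
  rcases Nat.eq_zero_or_pos q with rfl | hq
  · cases n <;> simp [grayN]
  induction n with
  | zero => simp [grayN]
  | succ n ih =>
    have hblock (i : ℕ) : (if i % 2 = 0 then grayN q n else (grayN q n).reverse).IsChain
        (fun u v => hamming u v = 1) := by
      split
      · exact ih
      · exact isChain_hamming_reverse.mpr ih
    have hblock_ne (i : ℕ) : (if i % 2 = 0 then grayN q n else (grayN q n).reverse) ≠ [] := by
      split <;> simp [grayN_ne_nil hq.ne']
    rw [grayN_succ, List.isChain_flatten (by simp [hblock_ne])]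
    refine ⟨?_, ?_⟩
    · simp only [List.mem_map]
      rintro _ ⟨i, -, rfl⟩
      exact (isChain_hamming_map (by simp)).mpr (hblock i)
    · obtain ⟨q, rfl⟩ := Nat.exists_eq_add_one_of_ne_zero hq.ne'
      rw [List.isChain_map, List.isChain_range_succ]
      intro i _ x hx y hy
      rw [List.getLast?_map, Option.mem_map] at hx
      rw [List.head?_map, Option.mem_map] at hy
      obtain ⟨u, hu, rfl⟩ := hx
      obtain ⟨v, hv, rfl⟩ := hy
      have hjoin : (if i % 2 = 0 then grayN (q + 1) n else (grayN (q + 1) n).reverse).getLast? =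
          (if (i + 1) % 2 = 0 then grayN (q + 1) n else (grayN (q + 1) n).reverse).head? := by
        rcases Nat.mod_two_eq_zero_or_one i with hi | hi
        · simp [hi, Nat.succ_mod_two_eq_one_iff.mpr hi, List.head?_reverse]
        · simp [hi, Nat.succ_mod_two_eq_zero_iff.mpr hi]
      rw [Option.mem_unique hu (hjoin ▸ hv)]
      simp

lemma C_eq_reverse_grayN (n : ℕ) : C n = (grayN 2 n).reverse := by
  induction n with
  | zero => rfl
  | succ n ih => simp [C, grayN_succ, List.range_succ, ih]

lemma mem_C {n : ℕ} {w : List ℕ} : w ∈ C n ↔ w.length = n ∧ ∀ b ∈ w, b < 2 := by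
  rw [C_eq_reverse_grayN, List.mem_reverse, mem_grayN]

lemma nodup_C (n : ℕ) : (C n).Nodup := by
  rw [C_eq_reverse_grayN, List.nodup_reverse]
  exact nodup_grayN 2 n

lemma isChain_C (n : ℕ) : (C n).IsChain (fun u v => hamming u v = 1) := by
  rw [C_eq_reverse_grayN, isChain_hamming_reverse]
  exact isChain_grayN 2 n

lemma getLast?_C (n : ℕ) : (C n).getLast? = some (List.replicate n 0) := by
  rw [C_eq_reverse_grayN, List.getLast?_reverse, head?_grayN two_ne_zero]

lemma head?_C_succ (n : ℕ) : (C (n + 1)).head? = some (1 :: List.replicate n 0) := by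
  rw [C_eq_reverse_grayN, List.head?_reverse, getLast?_grayN_succ_of_even even_two two_ne_zero]
  rfl

end ReflectedGray

section AvoidingZeros

lemma infix_or_infix_of_infix_append_cons {α : Type*} {s l₁ l₂ : List α} {a : α} (ha : a ∉ s)
    (h : s <:+: l₁ ++ a :: l₂) : s <:+: l₁ ∨ s <:+: l₂ := by
  rcases List.infix_append_iff.mp h with h | h | ⟨t₁, t₂, rfl, ht₁, ht₂⟩
  · exact .inl h
  · rcases List.infix_cons_iff.mp h with h | h
    · rcases List.prefix_cons_iff.mp h with rfl | ⟨t, rfl, -⟩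
      · exact .inr List.nil_infix
      · exact absurd (List.mem_cons_self ..) ha
    · exact .inr h
  · rcases List.prefix_cons_iff.mp ht₂ with rfl | ⟨t, rfl, -⟩
    · exact .inl (by simpa using ht₁.isInfix)
    · exact absurd (by simp) ha

lemma not_replicate_infix_replicate_append_one_cons {k j : ℕ} {v : List ℕ} (hj : j < k)
    (hv : ¬ List.replicate k 0 <:+: v) :
    ¬ List.replicate k 0 <:+: List.replicate j 0 ++ 1 :: v := by
  intro h
  rcases infix_or_infix_of_infix_append_cons (by simp) h with h | h
  · simpa using (List.infix_replicate_iff.mp h).1.trans_lt hj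
  · exact hv h

lemma exists_eq_replicate_zero_append_one_cons {w : List ℕ} (hw : ∀ b ∈ w, b < 2) (h1 : 1 ∈ w) :
    ∃ j v, w = List.replicate j 0 ++ 1 :: v := by
  induction w with
  | nil => simp at h1
  | cons b w ih =>
    obtain rfl | rfl : b = 0 ∨ b = 1 := by have := hw b (by simp); omega
    · obtain ⟨j, v, rfl⟩ := ih (fun b hb => hw b (by simp [hb])) (by simpa using h1)
      exact ⟨j + 1, v, rfl⟩
    · exact ⟨0, w, rfl⟩

lemma replicate_zero_append_one_cons_inj {i j : ℕ} {u v : List ℕ} :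
    List.replicate i 0 ++ 1 :: u = List.replicate j 0 ++ 1 :: v ↔ i = j ∧ u = v := by
  induction i generalizing j with
  | zero => cases j <;> simp [List.replicate_succ]
  | succ i ih => cases j <;> simp [List.replicate_succ, ih]

lemma exists_lt_eq_replicate_zero_append_one_cons {k : ℕ} {w : List ℕ} (hw : ∀ b ∈ w, b < 2)
    (hk : k ≤ w.length) (hav : ¬ List.replicate k 0 <:+: w) :
    ∃ j < k, ∃ v, w = List.replicate j 0 ++ 1 :: v := by
  by_cases h1 : 1 ∈ w
  · obtain ⟨j, v, rfl⟩ := exists_eq_replicate_zero_append_one_cons hw h1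
    refine ⟨j, ?_, v, rfl⟩
    by_contra! hj
    exact hav ((List.infix_replicate_iff.mpr (by simpa using hj)).trans List.infix_append_left)
  · have : w = List.replicate w.length 0 := by
      refine List.eq_replicate_iff.mpr ⟨rfl, fun b hb => ?_⟩
      have := hw b hb
      have := ne_of_mem_of_not_mem hb h1
      omega
    exact absurd (this ▸ List.infix_replicate_iff.mpr (by simpa using hk)) hav

end AvoidingZeros

section AvoidingGray

variable {k : ℕ}

lemma F_of_lt {n : ℕ} (h : n < k) : F k n = C n := by
  rw [F, dif_pos (.inl h)]

lemma F_of_le (hk : k ≠ 0) {n : ℕ} (h : k ≤ n) :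
    F k n = ((List.range k).map fun j =>
      (F k (n - (j + 1))).reverse.map (List.replicate j 0 ++ 1 :: ·)).flatten := by
  rw [F, dif_neg (by omega)]

lemma mem_F (hk : k ≠ 0) {n : ℕ} {w : List ℕ} :
    w ∈ F k n ↔ w.length = n ∧ (∀ b ∈ w, b < 2) ∧ ¬ List.replicate k 0 <:+: w := by
  induction n using Nat.strong_induction_on generalizing w with
  | _ n ih =>
  rcases lt_or_ge n k with hn | hn
  · rw [F_of_lt hn, mem_C]
    refine ⟨fun ⟨hl, hb⟩ => ⟨hl, hb, fun h => ?_⟩, fun h => ⟨h.1, h.2.1⟩⟩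
    have := h.length_le
    simp only [List.length_replicate, hl] at this
    omega
  simp only [F_of_le hk hn, List.mem_flatten, List.mem_map, List.mem_range,
    exists_exists_and_eq_and, List.mem_reverse]
  constructor
  · rintro ⟨j, hj, v, hv, rfl⟩
    obtain ⟨hl, hb, hav⟩ := ih _ (by omega) |>.mp hv
    refine ⟨by simp only [List.length_append, List.length_replicate, List.length_cons, hl]; omega,
      ?_, not_replicate_infix_replicate_append_one_cons hj hav⟩
    simp only [List.mem_append, List.mem_replicate, List.mem_cons]
    rintro b (⟨-, rfl⟩ | rfl | hbv)
    exacts [two_pos, one_lt_two, hb b hbv]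
  · rintro ⟨hl, hb, hav⟩
    obtain ⟨j, hj, v, rfl⟩ :=
      exists_lt_eq_replicate_zero_append_one_cons hb (hl ▸ hn) hav
    simp only [List.length_append, List.length_replicate, List.length_cons] at hl
    refine ⟨j, hj, v, (ih _ (by omega)).mpr ⟨by omega, fun b h => hb b (by simp [h]), ?_⟩, rfl⟩
    exact fun h => hav (h.trans ((List.suffix_cons 1 v).trans (List.suffix_append _ _)).isInfix)

lemma F_ne_nil (hk : k ≠ 0) (n : ℕ) : F k n ≠ [] := by
  refine List.ne_nil_of_mem (a := List.replicate n 1) ((mem_F hk).mpr ⟨by simp, by simp, ?_⟩)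
  intro h
  have := h.subset (List.mem_replicate.mpr ⟨hk, rfl⟩)
  simp [List.mem_replicate] at this

lemma nodup_F (hk : k ≠ 0) (n : ℕ) : (F k n).Nodup := by
  induction n using Nat.strong_induction_on with
  | _ n ih =>
  rcases lt_or_ge n k with hn | hn
  · rw [F_of_lt hn]
    exact nodup_C n
  rw [F_of_le hk hn, List.nodup_flatten, List.pairwise_map]
  refine ⟨?_, List.pairwise_lt_range.imp fun hij => ?_⟩
  · simp only [List.mem_map, List.mem_range, forall_exists_index, and_imp,
      forall_apply_eq_imp_iff₂]
    intro j hj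
    refine (List.nodup_reverse.mpr (ih _ (by omega))).map fun u v h => ?_
    simpa using h
  · simp only [List.disjoint_left, List.mem_map, List.mem_reverse]
    rintro _ ⟨v, -, rfl⟩ ⟨v', -, h⟩
    exact hij.ne (replicate_zero_append_one_cons_inj.mp h).1.symm

lemma head?_F_succ (hk : k ≠ 0) (n : ℕ) :
    (F k (n + 1)).head? = (F k n).getLast?.map (1 :: ·) := by
  rcases lt_or_ge (n + 1) k with hn | hn
  · rw [F_of_lt hn, F_of_lt (by omega), head?_C_succ, getLast?_C]
    rfl
  obtain ⟨k, rfl⟩ := Nat.exists_eq_add_one_of_ne_zero hk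
  rw [F_of_le hk hn, List.range_succ_eq_map, List.map_cons, List.flatten_cons,
    List.head?_append_of_ne_nil _ (by simp [F_ne_nil hk])]
  simp [List.head?_reverse]

lemma isChain_F (hk : k ≠ 0) (n : ℕ) : (F k n).IsChain (fun u v => hamming u v = 1) := by
  induction n using Nat.strong_induction_on with
  | _ n ih =>
  rcases lt_or_ge n k with hn | hn
  · rw [F_of_lt hn]
    exact isChain_C n
  rw [F_of_le hk hn, List.isChain_flatten (by simp [F_ne_nil hk])]
  refine ⟨?_, ?_⟩
  · simp only [List.mem_map, List.mem_range]
    rintro _ ⟨j, hj, rfl⟩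
    exact (isChain_hamming_map (by simp)).mpr (isChain_hamming_reverse.mpr (ih _ (by omega)))
  obtain ⟨k, rfl⟩ := Nat.exists_eq_add_one_of_ne_zero hk
  rw [List.isChain_map, List.isChain_range_succ]
  intro j hj x hx y hy
  rw [List.getLast?_map, List.getLast?_reverse, show n - (j + 1) = n - (j + 2) + 1 by omega,
    head?_F_succ hk] at hx
  rw [List.head?_map, List.head?_reverse] at hy
  obtain ⟨l, hl⟩ := Option.ne_none_iff_exists'.mp
    (mt List.getLast?_eq_none_iff.mp (F_ne_nil hk (n - (j + 2))))
  simp only [hl, Option.map_some, Option.mem_def, Option.some_inj] at hx hy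
  subst hx hy
  simp [List.replicate_succ']

end AvoidingGray

section Place

def binarize (w : List ℕ) : List ℕ := w.map fun b => if b = 0 then 0 else 1

@[simp] lemma length_binarize (w : List ℕ) : (binarize w).length = w.length := by
  simp [binarize]

lemma binarize_lt_two (w : List ℕ) : ∀ b ∈ binarize w, b < 2 := by
  simp only [binarize, List.mem_map]
  rintro _ ⟨a, -, rfl⟩
  split <;> omega

lemma replicate_zero_infix_binarize_iff {k : ℕ} {w : List ℕ} :
    List.replicate k 0 <:+: binarize w ↔ List.replicate k 0 <:+: w := by
  refine ⟨fun ⟨s, t, h⟩ => ?_,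
    fun h => by simpa [binarize] using h.map fun b => if b = 0 then 0 else 1⟩
  rw [List.append_assoc, eq_comm, binarize] at h
  obtain ⟨w₁, w₂, rfl, -, h⟩ := List.map_eq_append_iff.mp h
  obtain ⟨w₃, w₄, rfl, h₃, -⟩ := List.map_eq_append_iff.mp h
  have : w₃ = List.replicate k 0 := by
    rw [List.eq_replicate_iff]
    refine ⟨by simpa using congrArg List.length h₃, fun b hb => ?_⟩
    have := List.eq_of_mem_replicate (h₃ ▸ List.mem_map_of_mem hb)
    split at this <;> omega
  exact this ▸ List.infix_append' ..

@[simp] lemma place_nil (x : List ℕ) : place [] x = [] := rfl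

@[simp] lemma place_cons_zero (β x : List ℕ) : place (0 :: β) x = 0 :: place β x := rfl

@[simp] lemma place_cons_one (β : List ℕ) (a : ℕ) (x : List ℕ) :
    place (1 :: β) (a :: x) = a :: place β x := rfl

lemma place_replicate {β : List ℕ} (hβ : ∀ b ∈ β, b < 2) (c : ℕ) :
    place β (List.replicate (β.count 1) c) = β.map fun b => if b = 0 then 0 else c := by
  induction β with
  | nil => rfl
  | cons b β ih =>
    obtain rfl | rfl : b = 0 ∨ b = 1 := by have := hβ b (by simp); omega
    all_goals simp [List.replicate_succ, ih fun b hb => hβ b (by simp [hb])]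

lemma place_replicate_one {β : List ℕ} (hβ : ∀ b ∈ β, b < 2) :
    place β (List.replicate (β.count 1) 1) = β := by
  rw [place_replicate hβ]
  refine (List.map_congr_left fun b hb => ?_).trans (List.map_id β)
  have := hβ b hb
  simp only [id_eq]
  split_ifs <;> omega

lemma hamming_place {β : List ℕ} (hβ : ∀ b ∈ β, b < 2) {x y : List ℕ}
    (hx : x.length = β.count 1) (hy : y.length = β.count 1) :
    hamming (place β x) (place β y) = hamming x y := by
  induction β generalizing x y with
  | nil => simp_all
  | cons b β ih =>
    have hβ' : ∀ b ∈ β, b < 2 := fun b hb => hβ b (by simp [hb])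
    obtain rfl | rfl : b = 0 ∨ b = 1 := by have := hβ b (by simp); omega
    · simp_all
    · obtain _ | ⟨a, x⟩ := x
      · simp at hx
      obtain _ | ⟨c, y⟩ := y
      · simp at hy
      simp_all

lemma mem_place {β : List ℕ} (hβ : ∀ b ∈ β, b < 2) {x : List ℕ} (hx : x.length = β.count 1)
    {a : ℕ} (ha : a ∈ place β x) : a = 0 ∨ a ∈ x := by
  induction β generalizing x with
  | nil => simp at ha
  | cons b β ih =>
    have hβ' : ∀ b ∈ β, b < 2 := fun b hb => hβ b (by simp [hb])
    obtain rfl | rfl : b = 0 ∨ b = 1 := by have := hβ b (by simp); omega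
    · simp only [place_cons_zero, List.mem_cons] at ha
      exact ha.elim .inl (ih hβ' (by simpa using hx))
    · obtain _ | ⟨c, x⟩ := x
      · simp at hx
      simp only [place_cons_one, List.mem_cons] at ha ⊢
      rcases ha with rfl | ha
      · exact .inr (.inl rfl)
      · exact (ih hβ' (by simpa using hx) ha).imp_right .inr

lemma binarize_place {β : List ℕ} (hβ : ∀ b ∈ β, b < 2) {x : List ℕ}
    (hx : x.length = β.count 1) (hx0 : ∀ a ∈ x, a ≠ 0) : binarize (place β x) = β := by
  induction β generalizing x with
  | nil => rfl
  | cons b β ih =>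
    have hβ' : ∀ b ∈ β, b < 2 := fun b hb => hβ b (by simp [hb])
    obtain rfl | rfl : b = 0 ∨ b = 1 := by have := hβ b (by simp); omega
    · simp_all [binarize]
    · obtain _ | ⟨c, x⟩ := x
      · simp at hx
      simp_all [binarize]

lemma place_binarize (w : List ℕ) : place (binarize w) (w.filter (· ≠ 0)) = w := by
  induction w with
  | nil => rfl
  | cons b w ih => by_cases hb : b = 0 <;> simp_all [binarize]

lemma count_one_binarize (w : List ℕ) : (binarize w).count 1 = (w.filter (· ≠ 0)).length := by
  induction w with
  | nil => rfl
  | cons b w ih => by_cases hb : b = 0 <;> simp_all [binarize]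

end Place

section Expansion

variable {q : ℕ}

lemma expansion_ne_nil (hq2 : 2 ≤ q) (β : List ℕ) : expansion q β ≠ [] := by
  simp [expansion, grayN_ne_nil (by omega : q - 1 ≠ 0)]

lemma mem_expansion (hq2 : 2 ≤ q) {β w : List ℕ} (hβ : ∀ b ∈ β, b < 2) :
    w ∈ expansion q β ↔ binarize w = β ∧ ∀ b ∈ w, b < q := by
  simp only [expansion, List.map_map, List.mem_map, Function.comp_apply, mem_grayN]
  constructor
  · rintro ⟨x, ⟨hx, hxq⟩, rfl⟩
    have hlen : (x.map (· + 1)).length = β.count 1 := by simpa using hx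
    refine ⟨binarize_place hβ hlen (by simp), fun b hb => ?_⟩
    rcases mem_place hβ hlen hb with rfl | hb
    · omega
    · obtain ⟨a, ha, rfl⟩ := List.mem_map.mp hb
      have := hxq a ha
      omega
  · rintro ⟨rfl, hwq⟩
    refine ⟨(w.filter (· ≠ 0)).map (· - 1), ⟨by simp [count_one_binarize], ?_⟩, ?_⟩
    · simp only [List.mem_map, List.mem_filter]
      rintro _ ⟨b, ⟨hbw, -⟩, rfl⟩
      have := hwq b hbw
      omega
    · convert place_binarize w
      rw [List.map_map]
      refine (List.map_congr_left fun b hb => ?_).trans (List.map_id _)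
      have := (List.mem_filter.mp hb).2
      simp only [ne_eq, decide_eq_true_eq] at this
      simp only [Function.comp_apply, id_eq]
      omega

lemma nodup_expansion {β : List ℕ} (hβ : ∀ b ∈ β, b < 2) :
    (expansion q β).Nodup := by
  refine ((nodup_grayN _ _).map (List.map_injective_iff.mpr (add_left_injective 1))).map_on
    fun x hx y hy hxy => ?_
  simp only [List.mem_map, mem_grayN] at hx hy
  obtain ⟨u, ⟨hu, -⟩, rfl⟩ := hx
  obtain ⟨v, ⟨hv, -⟩, rfl⟩ := hy
  refine eq_of_hamming_eq_zero (by simp [hu, hv]) ?_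
  rw [← hamming_place hβ (by simp [hu]) (by simp [hv]), hxy, hamming_self]

lemma isChain_expansion {β : List ℕ} (hβ : ∀ b ∈ β, b < 2) :
    (expansion q β).IsChain (fun u v => hamming u v = 1) := by
  rw [expansion, List.isChain_map, List.isChain_map]
  refine (isChain_grayN _ _).imp_of_mem_imp fun u v hu hv h => ?_
  rw [mem_grayN] at hu hv
  rw [hamming_place hβ (by simp [hu.1]) (by simp [hv.1]), hamming_map (by simp), h]

lemma head?_expansion (hq2 : 2 ≤ q) {β : List ℕ} (hβ : ∀ b ∈ β, b < 2) :
    (expansion q β).head? = some β := by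
  simp [expansion, head?_grayN (by omega : q - 1 ≠ 0), place_replicate_one hβ]

/-- For even `q` the alphabet `{1, …, q-1}` has odd size, so `G(t, q-1) ⊕ 1` ends at `(q-1)^t`. -/
lemma getLast?_expansion (hq : Even q) (hq2 : 2 ≤ q) {β : List ℕ} (hβ : ∀ b ∈ β, b < 2) :
    (expansion q β).getLast? = some (β.map fun b => if b = 0 then 0 else q - 1) := by
  have hodd : Odd (q - 1) := by obtain ⟨r, rfl⟩ := hq; exact ⟨r - 1, by omega⟩
  simp [expansion, getLast?_grayN_of_odd hodd, ← place_replicate hβ,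
    show q - 1 - 1 + 1 = q - 1 by omega]

end Expansion

section Feven

variable {q k n : ℕ}

lemma mem_Feven {w : List ℕ} : w ∈ Feven q k n ↔ ∃ β ∈ F k n, w ∈ expansion q β := by
  simp [Feven, mem_alt]

lemma mem_Feven_iff (hq2 : 2 ≤ q) (hk : k ≠ 0) {w : List ℕ} :
    w ∈ Feven q k n ↔ w.length = n ∧ (∀ b ∈ w, b < q) ∧ ¬ List.replicate k 0 <:+: w := by
  rw [mem_Feven]
  constructor
  · rintro ⟨β, hβF, hw⟩
    obtain ⟨hl, hβ, hav⟩ := (mem_F hk).mp hβF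
    obtain ⟨rfl, hwq⟩ := (mem_expansion hq2 hβ).mp hw
    exact ⟨by simpa using hl, hwq, replicate_zero_infix_binarize_iff.not.mp hav⟩
  · rintro ⟨hl, hwq, hav⟩
    refine ⟨binarize w, (mem_F hk).mpr ⟨by simpa using hl, binarize_lt_two w, ?_⟩, ?_⟩
    · exact replicate_zero_infix_binarize_iff.not.mpr hav
    · exact (mem_expansion hq2 (binarize_lt_two w)).mpr ⟨rfl, hwq⟩

lemma nodup_Feven (hq2 : 2 ≤ q) (hk : k ≠ 0) : (Feven q k n).Nodup := by
  have hβ {β} (h : β ∈ F k n) := ((mem_F hk).mp h).2.1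
  refine nodup_alt ?_ (List.pairwise_map.mpr ((nodup_F hk n).imp_of_mem ?_))
  · simp only [List.mem_map]
    rintro _ ⟨β, h, rfl⟩
    exact nodup_expansion (hβ h)
  · intro β₁ β₂ h₁ h₂ hne w hw₁ hw₂
    rw [mem_expansion hq2 (hβ h₁)] at hw₁
    rw [mem_expansion hq2 (hβ h₂)] at hw₂
    exact hne (hw₁.1.symm.trans hw₂.1)

lemma isChain_Feven (hq : Even q) (hq2 : 2 ≤ q) (hk : k ≠ 0) :
    (Feven q k n).IsChain (fun u v => hamming u v = 1) := by
  have hβ {β} (h : β ∈ F k n) := ((mem_F hk).mp h).2.1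
  refine isChain_alt (fun u v h => by rwa [hamming_comm]) ?_ ?_ ?_
  · simp only [List.mem_map]
    rintro _ ⟨β, -, rfl⟩
    exact expansion_ne_nil hq2 β
  · simp only [List.mem_map]
    rintro _ ⟨β, h, rfl⟩
    exact isChain_expansion (hβ h)
  rw [List.isChain_map]
  refine (isChain_F hk n).imp_of_mem_imp fun β₁ β₂ h₁ h₂ h => ⟨?_, ?_⟩
  · simp only [getLast?_expansion hq hq2 (hβ h₁), getLast?_expansion hq hq2 (hβ h₂),
      Option.mem_def, Option.some_inj, forall_eq']
    rw [hamming_map fun a ha b hb hab => ?_, h]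
    have := hβ h₁ a ha
    have := hβ h₂ b hb
    split_ifs at hab <;> omega
  · simp only [head?_expansion hq2 (hβ h₁), head?_expansion hq2 (hβ h₂), Option.mem_def,
      Option.some_inj, forall_eq', h]

end Feven

/-- For `q ≥ 2` even and `k ≥ 2`, the alternating concatenation of the expansions of
the strings of `F(n,k)` is a Gray code list with Hamming distance `1` for the set of
length-`n` strings over `{0,...,q-1}` avoiding `k` consecutive `0`'s. -/
theorem stmt15 (q k n : ℕ) (hq : Even q) (hq2 : 2 ≤ q) (hk : 2 ≤ k) :
    List.Chain' (fun u v => hamming u v = 1) (Feven q k n) ∧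
    (Feven q k n).Nodup ∧
    (∀ w : List ℕ, w ∈ Feven q k n ↔
      (w.length = n ∧ (∀ b ∈ w, b < q) ∧ ¬ (List.replicate k 0 <:+: w))) := by
  have hk0 : k ≠ 0 := by omega
  exact ⟨isChain_Feven hq hq2 hk0, nodup_Feven hq2 hk0, fun w => mem_Feven_iff hq2 hk0⟩
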